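/- Let F : C ⥤ D and G : C' ⥤ D' be essentially surjective and full functors, and let H : E ⥤ D, H' : E ⥤ D' be any functors into the respective targets. Then the induced functor on pullbacks of cospans over a fixed middle category, (C ×_D E) → (C' ×_{D'} E') in the situation of a natural transformation which is the identity on the middle object, is again essentially surjective and full, provided the legs into the middle are isofibrations. (Special case of the stability of 1-surjections under pullbacks over a common base.) -/

import Mathlib

/-!
Both properties are checked componentwise. An object of `A' ×_B C'` is lifted by choosing
preimages of its two legs up to isomorphism and transporting its structure isomorphism back
along these isomorphisms and `α`, `β`. A morphism is lifted by choosing preimages of its two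
components; their compatibility square in `B` is the given one conjugated by the
isomorphisms `α` and `β`.
-/

open CategoryTheory

variable {A B C A' C' : Type*} [Category A] [Category B] [Category C]
  [Category A'] [Category C']

/-- `G` is an isofibration: every isomorphism `G e ≅ d` lifts to an isomorphism in the
source with domain `e`. -/
def Isofibration {E D : Type*} [Category E] [Category D] (G : E ⥤ D) : Prop :=
  ∀ ⦃e : E⦄ ⦃d : D⦄ (i : G.obj e ≅ d),
    ∃ (e' : E) (j : e ≅ e') (h : G.obj e' = d), G.map j.hom ≫ eqToHom h = i.hom

/-- The pseudo-pullback (iso-comma category) of `p : A ⥤ B` and `q : C ⥤ B`. -/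
def IsoPB (p : A ⥤ B) (q : C ⥤ B) : Type _ :=
  ObjectProperty.FullSubcategory (fun X : Comma p q => IsIso X.hom)

instance (p : A ⥤ B) (q : C ⥤ B) : Category (IsoPB p q) where
  Hom X Y := X.obj ⟶ Y.obj
  id X := 𝟙 X.obj
  comp u v := u ≫ v

/-- The functor `A ×_B C ⥤ A' ×_B C'` induced by functors `f : A ⥤ A'`, `g : C ⥤ C'`
over `B` (via natural isomorphisms `α : f ⋙ p' ≅ p`, `β : g ⋙ q' ≅ q`), the identity
on the middle category `B`. -/
def inducedPB {p : A ⥤ B} {q : C ⥤ B} {p' : A' ⥤ B} {q' : C' ⥤ B}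
    (f : A ⥤ A') (g : C ⥤ C') (α : f ⋙ p' ≅ p) (β : g ⋙ q' ≅ q) :
    IsoPB p q ⥤ IsoPB p' q' where
  obj X := ⟨⟨f.obj X.obj.left, g.obj X.obj.right,
      α.hom.app X.obj.left ≫ X.obj.hom ≫ β.inv.app X.obj.right⟩, by
    have : IsIso X.obj.hom := X.property
    dsimp
    infer_instance⟩
  map {X Y} u :=
    { left := f.map u.left
      right := g.map u.right
      w := by
        dsimp
        rw [show p'.map (f.map u.left) = (f ⋙ p').map u.left from rfl]
        slice_lhs 1 2 => rw [α.hom.naturality]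
        slice_lhs 2 3 => rw [u.w]
        slice_lhs 3 4 => rw [β.inv.naturality]
        simp }
  map_id X := by
    apply CommaMorphism.ext
    · exact f.map_id _
    · exact g.map_id _
  map_comp u v := by
    apply CommaMorphism.ext
    · exact f.map_comp _ _
    · exact g.map_comp _ _

section

variable {p : A ⥤ B} {q : C ⥤ B} {p' : A' ⥤ B} {q' : C' ⥤ B}
  (f : A ⥤ A') (g : C ⥤ C') (α : f ⋙ p' ≅ p) (β : g ⋙ q' ≅ q)

instance inducedPB_essSurj [f.EssSurj] [g.EssSurj] : (inducedPB f g α β).EssSurj where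
  mem_essImage Y := by
    have : IsIso Y.obj.hom := Y.property
    let ea := f.objObjPreimageIso Y.obj.left
    let ec := g.objObjPreimageIso Y.obj.right
    let X : IsoPB p q := ⟨⟨f.objPreimage Y.obj.left, g.objPreimage Y.obj.right,
        α.inv.app _ ≫ p'.map ea.hom ≫ Y.obj.hom ≫ q'.map ec.inv ≫ β.hom.app _⟩, by
      dsimp; infer_instance⟩
    let e : ((inducedPB f g α β).obj X).obj ≅ Y.obj :=
      Comma.isoMk ea ec (by simp [X, inducedPB])
    exact ⟨X, ⟨⟨e.hom, e.inv, e.hom_inv_id, e.inv_hom_id⟩⟩⟩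

instance inducedPB_full [f.Full] [g.Full] : (inducedPB f g α β).Full where
  map_surjective {X Y} v := by
    change ((inducedPB f g α β).obj X).obj ⟶ ((inducedPB f g α β).obj Y).obj at v
    obtain ⟨u, hu⟩ := f.map_surjective v.left
    obtain ⟨w, hw⟩ := g.map_surjective v.right
    refine ⟨⟨u, w, ?_⟩, CommaMorphism.ext hu hw⟩
    have hv := v.w
    dsimp [inducedPB] at hv
    rw [← hu, ← hw] at hv
    rw [← cancel_epi (α.hom.app X.obj.left), ← cancel_mono (β.inv.app Y.obj.right)]
    simp only [Category.assoc] at hv ⊢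
    erw [α.hom.naturality_assoc, ← β.inv.naturality] at hv
    simpa using hv

end

theorem stmt_16_general {p : A ⥤ B} {q : C ⥤ B} {p' : A' ⥤ B} {q' : C' ⥤ B}
    (f : A ⥤ A') (g : C ⥤ C') (α : f ⋙ p' ≅ p) (β : g ⋙ q' ≅ q)
    (hf₁ : f.EssSurj) (hf₂ : f.Full) (hg₁ : g.EssSurj) (hg₂ : g.Full) :
    (inducedPB f g α β).EssSurj ∧ (inducedPB f g α β).Full :=
  ⟨inferInstance, inferInstance⟩

/-- Stability of 1-surjections (essentially surjective and full functors) under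
pseudo-pullback over a fixed middle category: given cospans `A → B ← C` and
`A' → B ← C'`, functors `f : A ⥤ A'` and `g : C ⥤ C'` over `B` (the identity on the
middle object) which are essentially surjective and full, and assuming the legs into
the middle are isofibrations, the induced functor `A ×_B C ⥤ A' ×_B C'` is again
essentially surjective and full. -/
theorem stmt_16 {p : A ⥤ B} {q : C ⥤ B} {p' : A' ⥤ B} {q' : C' ⥤ B}
    (f : A ⥤ A') (g : C ⥤ C') (α : f ⋙ p' ≅ p) (β : g ⋙ q' ≅ q)
    (hf₁ : f.EssSurj) (hf₂ : f.Full) (hg₁ : g.EssSurj) (hg₂ : g.Full)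
    (hp' : Isofibration p') (hq' : Isofibration q') :
    (inducedPB f g α β).EssSurj ∧ (inducedPB f g α β).Full :=
  stmt_16_general f g α β hf₁ hf₂ hg₁ hg₂
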